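/- Let f be a monotone submodular set function on a finite ground set Ω, and let S be the set of size K produced by the greedy algorithm that starts from the empty set and, for K iterations, adds the element e ∈ Ω \ S maximizing the marginal gain Δ(e|S) = f(S ∪ {e}) − f(S). Then f(S) − f(∅) ≥ (1 − 1/e)(f(S*) − f(∅)), where S* is a maximizer of f over all subsets of Ω of cardinality at most K. -/

import Mathlib

/-!
Let `S*` be any set of at most `K` elements and `d k = f S* - f (S k)`. By monotonicity and
submodularity, `d k ≤ f (S k ∪ S*) - f (S k)` is at most the sum of the marginal gains at `S k` of
the elements of `S*`, hence at most `K` times the greedy gain `d k - d (k + 1)`. So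
`d (k + 1) ≤ (1 - 1/K) d k`, and `d K ≤ (1 - 1/K)^K d 0 ≤ d 0 / e`.
-/

open BigOperators Finset

section Submodular

variable {α : Type*} [DecidableEq α] {f : Finset α → ℝ}

def IsSubmodular (f : Finset α → ℝ) : Prop :=
  ∀ T D : Finset α, T ⊆ D → ∀ z, f (insert z D) - f D ≤ f (insert z T) - f T

theorem IsSubmodular.le_add_sum_sdiff (hf : IsSubmodular f) (A B : Finset α) :
    f (A ∪ B) ≤ f A + ∑ e ∈ B \ A, (f (insert e A) - f A) := by
  induction B using Finset.induction_on with
  | empty => simp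
  | @insert b B hb ih =>
    by_cases hbA : b ∈ A
    · rwa [union_insert, insert_eq_of_mem (mem_union_left _ hbA), insert_sdiff_of_mem _ hbA]
    · have hbBA : b ∉ B \ A := fun h => hb (mem_sdiff.1 h).1
      rw [union_insert, insert_sdiff_of_notMem _ hbA, sum_insert hbBA]
      linarith [hf A (A ∪ B) subset_union_left b]

theorem IsSubmodular.sub_le_mul_max_gain (hmono : Monotone f) (hf : IsSubmodular f)
    {A B : Finset α} {e : α} {K : ℕ} (hB : #B ≤ K)
    (he : ∀ e' ∉ A, f (insert e' A) - f A ≤ f (insert e A) - f A) :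
    f B - f A ≤ K * (f (insert e A) - f A) := by
  have hgain : 0 ≤ f (insert e A) - f A := sub_nonneg.2 (hmono (subset_insert e A))
  have hcard : (#(B \ A) : ℝ) ≤ K := by exact_mod_cast (card_le_card sdiff_subset).trans hB
  calc f B - f A ≤ f (A ∪ B) - f A := by gcongr; exact hmono subset_union_right
    _ ≤ ∑ e' ∈ B \ A, (f (insert e' A) - f A) := by linarith [hf.le_add_sum_sdiff A B]
    _ ≤ #(B \ A) • (f (insert e A) - f A) :=
      sum_le_card_nsmul _ _ _ fun e' he' => he e' (mem_sdiff.1 he').2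
    _ ≤ K * (f (insert e A) - f A) := by rw [nsmul_eq_mul]; gcongr

end Submodular

theorem greedy_approximation_guarantee_general {Ω : Type*} [DecidableEq Ω]
    (f : Finset Ω → ℝ)
    (hmono : ∀ (D : Finset Ω) (z : Ω), f D ≤ f (insert z D))
    (hsubmod : ∀ (T D : Finset Ω), T ⊆ D → ∀ z : Ω,
      f (insert z D) - f D ≤ f (insert z T) - f T)
    (K : ℕ) (S : ℕ → Finset Ω) (hS0 : S 0 = ∅)
    (hgreedy : ∀ k < K, ∃ e ∉ S k, S (k + 1) = insert e (S k) ∧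
      ∀ e' ∉ S k, f (insert e' (S k)) - f (S k) ≤ f (insert e (S k)) - f (S k))
    (Sstar : Finset Ω) (hScard : Sstar.card ≤ K) :
    f (S K) - f ∅ ≥ (1 - 1 / Real.exp 1) * (f Sstar - f ∅) := by
  have hf : Monotone f := monotone_iff_forall_le_insert.2 fun D z _ => hmono D z
  rcases Nat.eq_zero_or_pos K with rfl | hK
  · simp [card_eq_zero.1 (Nat.le_zero.1 hScard), hS0]
  have hK' : (1 : ℝ) ≤ K := by exact_mod_cast hK
  have hstep : ∀ k < K, f Sstar - f (S (k + 1)) ≤ (1 - 1 / K) * (f Sstar - f (S k)) := by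
    intro k hk
    obtain ⟨e, -, hSk, he⟩ := hgreedy k hk
    have hgap := IsSubmodular.sub_le_mul_max_gain hf hsubmod hScard he
    have hdiv : (f Sstar - f (S k)) / K ≤ f (insert e (S k)) - f (S k) := by
      rw [div_le_iff₀ (by positivity)]; linarith
    rw [hSk, sub_mul, one_mul, one_div_mul_eq_div]
    linarith
  have hdecay : (1 - 1 / (K : ℝ)) ^ K ≤ 1 / Real.exp 1 := by
    simpa [Real.exp_neg] using Real.one_sub_div_pow_le_exp_neg (n := K) (t := 1) hK'
  have hgap0 : 0 ≤ f Sstar - f ∅ := sub_nonneg.2 (hf (empty_subset _))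
  have hgeom := le_geom (u := fun k => f Sstar - f (S k))
    (sub_nonneg.2 (div_le_one_of_le₀ hK' (by positivity))) K hstep
  rw [hS0] at hgeom
  nlinarith [mul_le_mul_of_nonneg_right hdecay hgap0]

/-- Nemhauser et al.: the greedy algorithm for maximizing a monotone
submodular set function `f` over a finite ground set `Ω` subject to a cardinality
constraint `K` achieves a `(1 − 1/e)` approximation: if `S 0 = ∅` and at each of the
`K` iterations the element of `Ω \ S k` with maximal marginal gain is inserted, then
`f (S K) − f ∅ ≥ (1 − 1/e) (f S* − f ∅)` for any maximizer `S*` of `f` over subsets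
of `Ω` of cardinality at most `K`. -/
theorem greedy_approximation_guarantee {Ω : Type*} [Fintype Ω] [DecidableEq Ω]
    (f : Finset Ω → ℝ)
    (hmono : ∀ (D : Finset Ω) (z : Ω), f D ≤ f (insert z D))
    (hsubmod : ∀ (T D : Finset Ω), T ⊆ D → ∀ z : Ω,
      f (insert z D) - f D ≤ f (insert z T) - f T)
    (K : ℕ) (S : ℕ → Finset Ω) (hS0 : S 0 = ∅)
    (hgreedy : ∀ k < K, ∃ e ∉ S k, S (k + 1) = insert e (S k) ∧
      ∀ e' ∉ S k, f (insert e' (S k)) - f (S k) ≤ f (insert e (S k)) - f (S k))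
    (Sstar : Finset Ω) (hScard : Sstar.card ≤ K)
    (hSopt : ∀ T : Finset Ω, T.card ≤ K → f T ≤ f Sstar) :
    f (S K) - f ∅ ≥ (1 - 1 / Real.exp 1) * (f Sstar - f ∅) :=
  greedy_approximation_guarantee_general f hmono hsubmod K S hS0 hgreedy Sstar hScard
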